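/- Let G ⊆ ℝ^J, let d : cl(G) → 𝒫(ℝ^J) be a set-valued map, let ϕ, η : [0,∞) → ℝ^J be continuous functions, and fix t ∈ (0,∞). Suppose that for every s ∈ [0,t), η(t) − η(s) lies in the closed convex hull of ⋃_{u ∈ [s,t]} d(ϕ(u)). Then for every s ∈ [0,t), η(t) − η(s) lies in the closed convex hull of ⋃_{u ∈ (s,t]} d(ϕ(u)). -/

import Mathlib

open Set

theorem IsClosed.mem_of_continuousWithinAt_Ioo {E : Type*} [TopologicalSpace E] {f : ℝ → E}
    {K : Set E} (hK : IsClosed K) {s t : ℝ} (hst : s < t)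
    (hf : ContinuousWithinAt f (Ioo s t) s) (h : MapsTo f (Ioo s t) K) : f s ∈ K := by
  have hs : s ∈ closure (Ioo s t) := by
    rw [closure_Ioo hst.ne]
    exact left_mem_Icc.2 hst.le
  simpa only [hK.closure_eq] using hf.mem_closure hs h

theorem stmt2_general {J : ℕ}
    (d : EuclideanSpace ℝ (Fin J) → Set (EuclideanSpace ℝ (Fin J)))
    (φ η : ℝ → EuclideanSpace ℝ (Fin J))
    (hη : Continuous η)
    (t : ℝ)
    (h : ∀ s ∈ Set.Ico (0:ℝ) t,
      η t - η s ∈ closure (convexHull ℝ (⋃ u ∈ Set.Icc s t, d (φ u)))) :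
    ∀ s ∈ Set.Ico (0:ℝ) t,
      η t - η s ∈ closure (convexHull ℝ (⋃ u ∈ Set.Ioc s t, d (φ u))) := by
  rintro s ⟨hs, hst⟩
  refine isClosed_closure.mem_of_continuousWithinAt_Ioo hst
    (continuous_const.sub hη).continuousWithinAt fun r hr => ?_
  have hsub : Icc r t ⊆ Ioc s t := Icc_subset_Ioc hr.1 le_rfl
  exact closure_mono (convexHull_mono (biUnion_subset_biUnion_left hsub))
    (h r ⟨hs.trans hr.1.le, hr.2⟩)

/-- Lemma `lem-esp`: if for all s ∈ [0,t) the increment η(t) − η(s) lies in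
the closed convex hull of ⋃_{u∈[s,t]} d(ϕ(u)), then it also lies in the closed convex
hull of the half-open union ⋃_{u∈(s,t]} d(ϕ(u)). -/
theorem stmt2 {J : ℕ} (G : Set (EuclideanSpace ℝ (Fin J)))
    (d : EuclideanSpace ℝ (Fin J) → Set (EuclideanSpace ℝ (Fin J)))
    (φ η : ℝ → EuclideanSpace ℝ (Fin J))
    (hφ : Continuous φ) (hη : Continuous η)
    (hφG : ∀ u : ℝ, 0 ≤ u → φ u ∈ closure G)
    (t : ℝ) (ht : 0 < t)
    (h : ∀ s ∈ Set.Ico (0:ℝ) t,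
      η t - η s ∈ closure (convexHull ℝ (⋃ u ∈ Set.Icc s t, d (φ u)))) :
    ∀ s ∈ Set.Ico (0:ℝ) t,
      η t - η s ∈ closure (convexHull ℝ (⋃ u ∈ Set.Ioc s t, d (φ u))) :=
  stmt2_general d φ η hη t h
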